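/- arXiv:1606.09260 — 2 statements merged into one kernel-verified Lean document; each statement's English description precedes it below -/
import Mathlib

section
/- Let k ≥ 2 be an integer. The function a_0(ε) = 2(k+2)^3 / ((ε-2)^2 k^2 (εk+4)) attains a value on some ε ∈ (0,2) strictly smaller than its value at ε = 0 when k > 4; equivalently, for k > 4 there exists ε > 0 with a_0(ε) < a_0(0) = (k+2)^3/(8k^2). -/
/-- For `k > 4` there exists `ε ∈ (0,2)` with
`a₀(ε) = 2(k+2)³/((ε-2)² k² (εk+4))` strictly smaller than `a₀(0) = (k+2)³/(8k²)`. -/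
theorem stmt3 (k : ℕ) (hk : 2 ≤ k) (hk4 : 4 < k) :
    ∃ ε : ℝ, 0 < ε ∧ ε < 2 ∧
      2 * ((k : ℝ) + 2) ^ 3 / ((ε - 2) ^ 2 * (k : ℝ) ^ 2 * (ε * k + 4)) <
        ((k : ℝ) + 2) ^ 3 / (8 * (k : ℝ) ^ 2) := by
  have hk5 : (5:ℝ) ≤ (k:ℝ) := by exact_mod_cast hk4
  have hkpos : (0:ℝ) < (k:ℝ) := by linarith
  refine ⟨1/(k:ℝ), by positivity, ?_, ?_⟩
  · rw [div_lt_iff₀ hkpos] at *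
    nlinarith
  · have hker : (1/(k:ℝ)) * k = 1 := by field_simp
    have hlt : 1/(k:ℝ) ≤ 1/5 := by
      apply one_div_le_one_div_of_le <;> linarith
    have hd : (0:ℝ) < (1/(k:ℝ) - 2) ^ 2 * (k:ℝ) ^ 2 * (1/(k:ℝ) * k + 4) := by
      rw [hker]
      have : (1/(k:ℝ) - 2) ≠ 0 := by nlinarith
      positivity
    rw [div_lt_div_iff₀ hd (by positivity), hker]
    have hp : (0:ℝ) < ((k:ℝ)+2)^3 := by positivity
    have h2 : (1/(k:ℝ) - 2)^2 * (k:ℝ)^2 = (1 - 2*(k:ℝ))^2 := by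
      field_simp
    rw [h2]
    nlinarith [mul_pos hp (mul_pos hkpos hkpos), sq_nonneg ((k:ℝ)-5)]
end

section
/- For real numbers p > 1 and q > 0, the inequality -(p+q-1)^2(p^2 - 2pq + q - 1)/(2(p-1)^2 q^2) > 0 holds if and only if q > (p^2-1)/(2p-1). -/
/-- The Donaldson–Futaki invariant `-(p+q-1)²(p²-2pq+q-1)/(2(p-1)²q²)` is positive
if and only if `q > (p²-1)/(2p-1)`. -/
theorem stmt7 (p q : ℝ) (hp : 1 < p) (hq : 0 < q) :
    0 < -((p + q - 1) ^ 2 * (p ^ 2 - 2 * p * q + q - 1)) / (2 * (p - 1) ^ 2 * q ^ 2) ↔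
      (p ^ 2 - 1) / (2 * p - 1) < q := by
  have hden : (0:ℝ) < 2 * (p - 1) ^ 2 * q ^ 2 := by have := pow_pos (show (0:ℝ) < p - 1 by linarith) 2; have := pow_pos hq 2; nlinarith
  have hsq : (0:ℝ) < (p + q - 1) ^ 2 := pow_pos (by linarith) 2
  rw [lt_div_iff₀ hden, div_lt_iff₀ (by linarith : (0:ℝ) < 2 * p - 1)]
  constructor
  · intro h
    nlinarith [sq_nonneg (p + q - 1)]
  · intro h
    nlinarith [mul_pos hsq (show (0:ℝ) < q * (2*p-1) - (p^2-1) by linarith)]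
end
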